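/- Let V be a finite ground set and f a monotone submodular function on subsets of V with f(∅) = 0 and nonnegative values. Let (G_i) be a greedy sequence for f (G_0 = ∅ and G_{i+1} = G_i ∪ {x} with x ∈ V maximizing the marginal gain). Then for every subset OPT ⊆ V with |OPT| ≤ k and every ℓ ≥ 0, f(G_ℓ) ≥ (1 − (1 − 1/k)^ℓ)·f(OPT). -/

import Mathlib

/-!
Each greedy step gains at least a `1/k`-fraction of the remaining gap `f OPT - f (G i)`:
by monotonicity and submodularity, `f OPT - f (G i)` is at most the sum of the marginal gains
of the elements of `OPT` at `G i`, each of which is bounded by the greedy gain. Hence the gap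
contracts by the factor `1 - 1/k` at every step.
-/

open Finset

section Submodular

variable {α : Type*} [DecidableEq α] {V : Finset α} {f : Finset α → ℝ}

theorem marginal_nonneg (hmono : ∀ S T : Finset α, S ⊆ T → T ⊆ V → f S ≤ f T)
    {S : Finset α} {x : α} (hS : S ⊆ V) (hx : x ∈ V) : 0 ≤ f (insert x S) - f S :=
  sub_nonneg.2 <| hmono _ _ (subset_insert x S) (insert_subset hx hS)

theorem union_sub_le_sum_marginal (hmono : ∀ S T : Finset α, S ⊆ T → T ⊆ V → f S ≤ f T)
    (hsubmod : ∀ S T : Finset α, S ⊆ T → T ⊆ V → ∀ x ∈ V, x ∉ T →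
      f (insert x T) - f T ≤ f (insert x S) - f S)
    {A S : Finset α} (hA : A ⊆ V) (hS : S ⊆ V) :
    f (A ∪ S) - f S ≤ ∑ x ∈ A, (f (insert x S) - f S) := by
  induction A using Finset.induction_on with
  | empty => simp
  | @insert a A ha ih =>
    obtain ⟨haV, hAV⟩ := insert_subset_iff.1 hA
    rw [sum_insert ha, insert_union]
    have hprev := ih hAV
    by_cases haAS : a ∈ A ∪ S
    · rw [insert_eq_self.2 haAS]
      linarith [marginal_nonneg hmono hS haV]
    · linarith [hsubmod S (A ∪ S) subset_union_right (union_subset hAV hS) a haV haAS]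

theorem sub_le_card_mul_of_marginal_le (hmono : ∀ S T : Finset α, S ⊆ T → T ⊆ V → f S ≤ f T)
    (hsubmod : ∀ S T : Finset α, S ⊆ T → T ⊆ V → ∀ x ∈ V, x ∉ T →
      f (insert x T) - f T ≤ f (insert x S) - f S)
    {A S : Finset α} {g : ℝ} (hA : A ⊆ V) (hS : S ⊆ V)
    (hg : ∀ x ∈ V, f (insert x S) - f S ≤ g) :
    f A - f S ≤ #A * g := by
  have hAS : f A ≤ f (A ∪ S) := hmono _ _ subset_union_left (union_subset hA hS)
  have hsum : ∑ x ∈ A, (f (insert x S) - f S) ≤ #A • g :=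
    sum_le_card_nsmul _ _ _ fun x hx => hg x (hA hx)
  rw [nsmul_eq_mul] at hsum
  linarith [union_sub_le_sum_marginal hmono hsubmod hA hS]

end Submodular

section Greedy

variable {α : Type*} [DecidableEq α] {V : Finset α} {f : Finset α → ℝ} {G : ℕ → Finset α}

theorem greedy_subset (hG0 : G 0 = ∅)
    (hGstep : ∀ i : ℕ, ∃ x ∈ V, G (i + 1) = insert x (G i) ∧
      ∀ y ∈ V, f (insert y (G i)) - f (G i) ≤ f (insert x (G i)) - f (G i))
    (i : ℕ) : G i ⊆ V := by
  induction i with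
  | zero => simp [hG0]
  | succ i ih =>
    obtain ⟨x, hxV, hx, -⟩ := hGstep i
    exact hx ▸ insert_subset hxV ih

theorem greedy_gap_succ_le (hmono : ∀ S T : Finset α, S ⊆ T → T ⊆ V → f S ≤ f T)
    (hsubmod : ∀ S T : Finset α, S ⊆ T → T ⊆ V → ∀ x ∈ V, x ∉ T →
      f (insert x T) - f T ≤ f (insert x S) - f S)
    (hG0 : G 0 = ∅)
    (hGstep : ∀ i : ℕ, ∃ x ∈ V, G (i + 1) = insert x (G i) ∧
      ∀ y ∈ V, f (insert y (G i)) - f (G i) ≤ f (insert x (G i)) - f (G i))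
    {k : ℕ} {OPT : Finset α} (hOPT : OPT ⊆ V) (hcard : #OPT ≤ k) (i : ℕ) :
    f OPT - f (G (i + 1)) ≤ (1 - 1 / (k : ℝ)) * (f OPT - f (G i)) := by
  obtain ⟨x, hxV, hx, hmax⟩ := hGstep i
  have hGi := greedy_subset hG0 hGstep i
  have hgain : 0 ≤ f (G (i + 1)) - f (G i) := hx ▸ marginal_nonneg hmono hGi hxV
  have hgap : f OPT - f (G i) ≤ k * (f (G (i + 1)) - f (G i)) :=
    calc f OPT - f (G i) ≤ #OPT * (f (G (i + 1)) - f (G i)) :=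
          sub_le_card_mul_of_marginal_le hmono hsubmod hOPT hGi (hx ▸ hmax)
      _ ≤ k * (f (G (i + 1)) - f (G i)) :=
          mul_le_mul_of_nonneg_right (by exact_mod_cast hcard) hgain
  rcases k.eq_zero_or_pos with rfl | hk
  · simp only [CharP.cast_eq_zero, div_zero, sub_zero, one_mul]
    linarith
  · have hfrac : (f OPT - f (G i)) / k ≤ f (G (i + 1)) - f (G i) :=
      div_le_of_le_mul₀ (Nat.cast_nonneg k) hgain (mul_comm (k : ℝ) _ ▸ hgap)
    have hexpand : (1 - 1 / (k : ℝ)) * (f OPT - f (G i))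
        = f OPT - f (G i) - (f OPT - f (G i)) / k := by
      ring
    linarith

end Greedy

theorem greedy_ell_step_guarantee_general
    {α : Type*} [DecidableEq α] (V : Finset α) (f : Finset α → ℝ)
    (hnonneg : ∀ S : Finset α, S ⊆ V → 0 ≤ f S)
    (hmono : ∀ S T : Finset α, S ⊆ T → T ⊆ V → f S ≤ f T)
    (hsubmod : ∀ S T : Finset α, S ⊆ T → T ⊆ V → ∀ x ∈ V, x ∉ T →
      f (insert x T) - f T ≤ f (insert x S) - f S)
    (G : ℕ → Finset α)
    (hG0 : G 0 = ∅)
    (hGstep : ∀ i : ℕ, ∃ x ∈ V, G (i + 1) = insert x (G i) ∧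
      ∀ y ∈ V, f (insert y (G i)) - f (G i) ≤ f (insert x (G i)) - f (G i))
    (k : ℕ) (OPT : Finset α) (hOPT : OPT ⊆ V) (hcard : OPT.card ≤ k) :
    ∀ ℓ : ℕ, (1 - (1 - 1 / (k : ℝ)) ^ ℓ) * f OPT ≤ f (G ℓ) := by
  intro ℓ
  set c : ℝ := 1 - 1 / (k : ℝ)
  have hc : 0 ≤ c := by
    rcases k.eq_zero_or_pos with rfl | hk
    · simp [c]
    · exact sub_nonneg.2 <| (div_le_one (by positivity)).2 (by exact_mod_cast hk)
  have hdecay : f OPT - f (G ℓ) ≤ c ^ ℓ * (f OPT - f (G 0)) :=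
    le_geom (u := fun i => f OPT - f (G i)) hc ℓ fun i _ =>
      greedy_gap_succ_le hmono hsubmod hG0 hGstep hOPT hcard i
  have hempty : 0 ≤ f (G 0) := hnonneg _ (greedy_subset hG0 hGstep 0)
  nlinarith [pow_nonneg hc ℓ]

/-- **ℓ-step greedy guarantee.**
For a monotone, submodular, nonnegative `f` with `f ∅ = 0` and a greedy sequence `G`,
for every `OPT ⊆ V` with `|OPT| ≤ k` and every `ℓ ≥ 0`,
`f (G ℓ) ≥ (1 - (1 - 1/k)^ℓ)·f OPT`. -/
theorem greedy_ell_step_guarantee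
    {α : Type*} [DecidableEq α] (V : Finset α) (f : Finset α → ℝ)
    (hnonneg : ∀ S : Finset α, S ⊆ V → 0 ≤ f S)
    (hmono : ∀ S T : Finset α, S ⊆ T → T ⊆ V → f S ≤ f T)
    (hsubmod : ∀ S T : Finset α, S ⊆ T → T ⊆ V → ∀ x ∈ V, x ∉ T →
      f (insert x T) - f T ≤ f (insert x S) - f S)
    (hempty : f ∅ = 0)
    (G : ℕ → Finset α)
    (hG0 : G 0 = ∅)
    (hGstep : ∀ i : ℕ, ∃ x ∈ V, G (i + 1) = insert x (G i) ∧
      ∀ y ∈ V, f (insert y (G i)) - f (G i) ≤ f (insert x (G i)) - f (G i))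
    (k : ℕ) (OPT : Finset α) (hOPT : OPT ⊆ V) (hcard : OPT.card ≤ k) :
    ∀ ℓ : ℕ, (1 - (1 - 1 / (k : ℝ)) ^ ℓ) * f OPT ≤ f (G ℓ) :=
  greedy_ell_step_guarantee_general V f hnonneg hmono hsubmod G hG0 hGstep k OPT hOPT hcard
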